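/- arXiv:2411.08471 — 9 statements merged into one kernel-verified Lean document; each statement's English description precedes it below -/
import Mathlib

section
/- The two-player visibility game has no pure Nash equilibrium: there is no profile (a_1, a_2) ∈ [0,1]^2 such that U_i(a_i, a_{-i}) ≥ U_i(ã_i, a_{-i}) for both players i and all ã_i ∈ [0,1]. -/
open Set Function

variable {ι : Type*} [Fintype ι] [DecidableEq ι] {α : ι → Type*}

/-- Stability condition (1) of an equilibrium cycle: for every player `i` and every
opponent profile lying in `E`, some action in `E i` strictly outperforms every
action in `A i \ E i`. -/
def Stability (A E : ∀ i, Set (α i)) (U : ι → (∀ j, α j) → ℝ) : Prop :=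
  ∀ (i : ι) (a : ∀ j, α j), (∀ j, j ≠ i → a j ∈ E j) →
    ∃ b ∈ E i, ∀ c ∈ A i \ E i,
      U i (update a i b) > U i (update a i c)

/-- Unrest condition (2) of an equilibrium cycle: at every profile in `E`, some player
has a strictly improving deviation inside `E i` that also strictly outperforms every
action in `A i \ E i`. -/
def Unrest (A E : ∀ i, Set (α i)) (U : ι → (∀ j, α j) → ℝ) : Prop :=
  ∀ a : ∀ j, α j, (∀ j, a j ∈ E j) →
    ∃ i, ∃ b ∈ E i, U i (update a i b) > U i a ∧
      ∀ c ∈ A i \ E i, U i (update a i b) > U i (update a i c)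

/-- Equilibrium cycle: a nonempty closed Cartesian product set satisfying
stability, unrest, and minimality (no nonempty closed Cartesian product strict
subset satisfies stability and unrest). -/
def IsEquilibriumCycle [∀ i, MetricSpace (α i)] (A E : ∀ i, Set (α i))
    (U : ι → (∀ j, α j) → ℝ) : Prop :=
  (∀ i, (E i).Nonempty) ∧ (∀ i, E i ⊆ A i) ∧ (∀ i, IsClosed (E i)) ∧
  Stability A E U ∧ Unrest A E U ∧
  ∀ F : ∀ i, Set (α i), (∀ i, (F i).Nonempty) → (∀ i, IsClosed (F i)) →
    Set.pi Set.univ F ⊂ Set.pi Set.univ E → ¬(Stability A F U ∧ Unrest A F U)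

/-- Pure Nash equilibrium of the game with action sets `A` and utilities `U`. -/
def IsPureNash (A : ∀ i, Set (α i)) (U : ι → (∀ j, α j) → ℝ)
    (a : ∀ j, α j) : Prop :=
  (∀ j, a j ∈ A j) ∧ ∀ i, ∀ b ∈ A i, U i a ≥ U i (update a i b)

/-- Payoff in the two-player visibility game: own action `x`, opponent action `y`. -/
noncomputable def visPay (x y : ℝ) : ℝ :=
  if x < y then y - x else if x = y then 0 else 1 - x

/-- The opponent of a player in a two-player game. -/
def opp : Fin 2 → Fin 2 := fun i => if i = 0 then 1 else 0

/-- Utility functions of the two-player visibility game. -/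
noncomputable def visU : Fin 2 → (Fin 2 → ℝ) → ℝ := fun i a => visPay (a i) (a (opp i))

/-- Action sets of the visibility game: `[0, 1]` for each player. -/
def visA : Fin 2 → Set ℝ := fun _ => Set.Icc 0 1

/-- The candidate equilibrium cycle `[0, 0.5]²`. -/
def visE : Fin 2 → Set ℝ := fun _ => Set.Icc 0 (1 / 2)

/-- The two-player visibility game has no pure Nash equilibrium. -/
theorem visibility_no_pure_nash : ¬ ∃ a : Fin 2 → ℝ, IsPureNash visA visU a := by
  rintro ⟨a, hA, hN⟩
  have hx := hA 0
  have hy := hA 1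
  simp only [visA, Set.mem_Icc] at hx hy
  have h0 : ∀ b ∈ Set.Icc (0:ℝ) 1, visPay (a 0) (a 1) ≥ visPay b (a 1) := by
    intro b hb
    have := hN 0 b hb
    simpa [visU, opp, Function.update] using this
  have h1 : ∀ b ∈ Set.Icc (0:ℝ) 1, visPay (a 1) (a 0) ≥ visPay b (a 0) := by
    intro b hb
    have := hN 1 b hb
    simpa [visU, opp, Function.update] using this
  rcases lt_trichotomy (a 0) (a 1) with h | h | h
  · by_cases hx0 : a 0 = 0
    · have H := h1 (a 1 / 2) ⟨by linarith, by linarith⟩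
      simp only [visPay] at H
      split_ifs at H <;> linarith
    · have H := h0 0 ⟨le_refl 0, by norm_num⟩
      simp only [visPay] at H
      split_ifs at H <;> linarith [lt_of_le_of_ne hx.1 (Ne.symm hx0)]
  · by_cases hx0 : a 0 = 0
    · have H := h0 (1/2) ⟨by norm_num, by norm_num⟩
      simp only [visPay] at H
      split_ifs at H <;> linarith
    · have H := h0 0 ⟨le_refl 0, by norm_num⟩
      simp only [visPay] at H
      split_ifs at H <;> linarith [lt_of_le_of_ne hx.1 (Ne.symm hx0)]
  · by_cases hy0 : a 1 = 0
    · have H := h0 (a 0 / 2) ⟨by linarith, by linarith⟩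
      simp only [visPay] at H
      split_ifs at H <;> linarith
    · have H := h1 0 ⟨le_refl 0, by norm_num⟩
      simp only [visPay] at H
      split_ifs at H <;> linarith [lt_of_le_of_ne hy.1 (Ne.symm hy0)]
end

section
/- In the two-player visibility game, the set [0, 0.5]^2 satisfies the stability condition: for each player i and each opponent action a_{-i} ∈ [0, 0.5], there exists a_i ∈ [0, 0.5] such that U_i(a_i, a_{-i}) > U_i(ã_i, a_{-i}) for all ã_i ∈ (0.5, 1]. -/
open Set Function

variable {ι : Type*} [Fintype ι] [DecidableEq ι] {α : ι → Type*}

/-- In the visibility game, `[0, 0.5]²` satisfies the stability condition. -/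
theorem visibility_stability : Stability visA visE visU := by
  intro i a ha
  have hoi : opp i ≠ i := by fin_cases i <;> decide
  have hy : a (opp i) ∈ Set.Icc (0:ℝ) (1/2) := ha (opp i) hoi
  obtain ⟨hy0, hy1⟩ := hy
  have key : ∀ b : ℝ, visPay b (a (opp i)) = 1/2 → b ∈ visE i →
      ∃ b' ∈ visE i, ∀ c ∈ visA i \ visE i,
        visU i (update a i b') > visU i (update a i c) := by
    intro b hb hbE
    refine ⟨b, hbE, fun c hc => ?_⟩
    obtain ⟨⟨hc0, hc1⟩, hcE⟩ := hc
    have hch : (1:ℝ)/2 < c := by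
      by_contra h
      exact hcE ⟨hc0, le_of_not_gt h⟩
    have hcy : a (opp i) < c := lt_of_le_of_lt hy1 hch
    have e1 : visU i (update a i b) = visPay b (a (opp i)) := by
      simp [visU, update_of_ne hoi, update_self]
    have e2 : visU i (update a i c) = visPay c (a (opp i)) := by
      simp [visU, update_of_ne hoi, update_self]
    rw [e1, e2, hb]
    unfold visPay
    rw [if_neg (not_lt.2 hcy.le), if_neg hcy.ne']
    linarith
  rcases eq_or_lt_of_le hy1 with h | h
  · refine key 0 ?_ ⟨le_refl 0, by norm_num⟩
    unfold visPay
    rw [h]; norm_num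
  · refine key (1/2) ?_ ⟨by norm_num, le_refl _⟩
    unfold visPay
    rw [if_neg (not_lt.2 h.le), if_neg h.ne']
    norm_num
end

section
/- In the two-player visibility game, the set [0, 0.5]^2 satisfies the unrest condition: for every profile (a_1, a_2) ∈ [0, 0.5]^2, there exist a player i and an action a'_i ∈ [0, 0.5] such that U_i(a'_i, a_{-i}) > U_i(a_i, a_{-i}) and U_i(a'_i, a_{-i}) > U_i(ã_i, a_{-i}) for all ã_i ∈ (0.5, 1]. -/
open Set Function

variable {ι : Type*} [Fintype ι] [DecidableEq ι] {α : ι → Type*}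

lemma visPay_lt {x y : ℝ} (h : x < y) : visPay x y = y - x := by
  unfold visPay; rw [if_pos h]

lemma visPay_self (x : ℝ) : visPay x x = 0 := by
  unfold visPay; simp

lemma visPay_gt {x y : ℝ} (h : y < x) : visPay x y = 1 - x := by
  unfold visPay; rw [if_neg (by linarith), if_neg (by linarith)]

/-- In the visibility game, `[0, 0.5]²` satisfies the unrest condition. -/
theorem visibility_unrest : Unrest visA visE visU := by
  intro a ha
  have h0 := ha 0
  have h1 := ha 1
  simp only [visE, Set.mem_Icc] at h0 h1
  have e0 : ∀ b, visU 0 (update a 0 b) = visPay b (a 1) := by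
    intro b; simp [visU, opp, update]
  have e1 : ∀ b, visU 1 (update a 1 b) = visPay b (a 0) := by
    intro b; simp [visU, opp, update]
  have u0 : visU 0 a = visPay (a 0) (a 1) := by simp [visU, opp]
  have u1 : visU 1 a = visPay (a 1) (a 0) := by simp [visU, opp]
  have hc' : ∀ c : ℝ, c ∈ visA 0 \ visE 0 → 1/2 < c ∧ c ≤ 1 := by
    intro c hc
    obtain ⟨⟨hc0, hc1⟩, hc2⟩ := hc
    exact ⟨lt_of_not_ge fun h => hc2 ⟨hc0, h⟩, hc1⟩
  rcases lt_or_eq_of_le h1.2 with hy | hy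
  · rcases le_or_gt (a 0) (a 1) with hxy | hxy
    · -- player 0 deviates to 1/2
      refine ⟨0, 1/2, ⟨by norm_num, by norm_num⟩, ?_, ?_⟩
      · rw [e0, u0, visPay_gt hy]
        rcases lt_or_eq_of_le hxy with h | h
        · rw [visPay_lt h]; linarith
        · rw [h, visPay_self]; norm_num
      · intro c hc
        obtain ⟨hc1, hc2⟩ := hc' c hc
        rw [e0, e0, visPay_gt hy, visPay_gt (by linarith : a 1 < c)]
        linarith
    · -- player 1 deviates to 1/2
      rcases lt_or_eq_of_le h0.2 with hx | hx
      · refine ⟨1, 1/2, ⟨by norm_num, by norm_num⟩, ?_, ?_⟩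
        · rw [e1, u1, visPay_gt hx, visPay_lt hxy]; linarith
        · intro c hc
          obtain ⟨hc1, hc2⟩ := hc' c hc
          rw [e1, e1, visPay_gt hx, visPay_gt (by linarith : a 0 < c)]
          linarith
      · -- a 0 = 1/2, a 1 < a 0: player 0 deviates to (a 1 + 1/2)/2
        refine ⟨0, (a 1 + 1/2)/2, ⟨by linarith [h1.1], by linarith⟩, ?_, ?_⟩
        · rw [e0, u0, visPay_gt (by linarith : a 1 < (a 1 + 1/2)/2),
            visPay_gt (by linarith : a 1 < a 0)]
          linarith
        · intro c hc
          obtain ⟨hc1, hc2⟩ := hc' c hc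
          rw [e0, e0, visPay_gt (by linarith : a 1 < (a 1 + 1/2)/2),
            visPay_gt (by linarith : a 1 < c)]
          linarith
  · rcases lt_or_eq_of_le h0.2 with hx | hx
    · -- a 1 = 1/2, a 0 < 1/2: player 1 deviates to (a 0 + 1/2)/2
      refine ⟨1, (a 0 + 1/2)/2, ⟨by linarith [h0.1], by linarith⟩, ?_, ?_⟩
      · rw [e1, u1, visPay_gt (by linarith : a 0 < (a 0 + 1/2)/2),
          visPay_gt (by linarith : a 0 < a 1)]
        linarith
      · intro c hc
        obtain ⟨hc1, hc2⟩ := hc' c hc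
        rw [e1, e1, visPay_gt (by linarith : a 0 < (a 0 + 1/2)/2),
          visPay_gt (by linarith : a 0 < c)]
        linarith
    · -- a 0 = a 1 = 1/2: player 0 deviates to 0
      refine ⟨0, 0, ⟨le_refl 0, by norm_num⟩, ?_, ?_⟩
      · rw [e0, u0, visPay_lt (by linarith : (0:ℝ) < a 1), hx, ← hy, visPay_self]
        linarith
      · intro c hc
        obtain ⟨hc1, hc2⟩ := hc' c hc
        rw [e0, e0, visPay_lt (by linarith : (0:ℝ) < a 1),
          visPay_gt (by linarith : a 1 < c)]
        linarith
end

section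
/- For the N-player visibility game with N ≥ 2, the set [0, (N−1)/N]^N is an equilibrium cycle. -/
open Set Function

variable {ι : Type*} [Fintype ι] [DecidableEq ι] {α : ι → Type*}

open scoped Classical in
/-- Utilities of the `N`-player visibility game: with
`L i = {a j : a j ≥ a i, j ≠ i}`, player `i` gets `min (L i) - a i` if `L i ≠ ∅`,
and `1 - a i` otherwise. -/
noncomputable def visNU (N : ℕ) : Fin N → (Fin N → ℝ) → ℝ := fun i a =>
  if h : (Finset.univ.filter fun j => j ≠ i ∧ a i ≤ a j).Nonempty then
    (Finset.univ.filter fun j => j ≠ i ∧ a i ≤ a j).inf' h a - a i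
  else 1 - a i

section ECAux

private lemma visNU_empty {N : ℕ} {i : Fin N} {x : Fin N → ℝ}
    (h : ∀ j, j ≠ i → x j < x i) : visNU N i x = 1 - x i := by
  unfold visNU
  rw [dif_neg]
  rintro ⟨j, hj⟩
  rw [Finset.mem_filter] at hj
  exact absurd hj.2.2 (not_le.2 (h j hj.2.1))

private lemma visNU_le {N : ℕ} {i j0 : Fin N} {x : Fin N → ℝ}
    (hj : j0 ≠ i) (hle : x i ≤ x j0) : visNU N i x ≤ x j0 - x i := by
  unfold visNU
  have hmem : j0 ∈ Finset.univ.filter (fun j => j ≠ i ∧ x i ≤ x j) := by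
    simp [hj, hle]
  rw [dif_pos ⟨j0, hmem⟩]
  have := Finset.inf'_le x hmem
  · linarith

private lemma visNU_ge {N : ℕ} {i : Fin N} {x : Fin N → ℝ} {m : ℝ}
    (h1 : ∀ j, j ≠ i → x i ≤ x j → m ≤ x j) (h2 : m ≤ 1) :
    m - x i ≤ visNU N i x := by
  unfold visNU
  split_ifs with h
  · have : m ≤ (Finset.univ.filter (fun j => j ≠ i ∧ x i ≤ x j)).inf' h x := by
      apply Finset.le_inf'
      intro j hj
      rw [Finset.mem_filter] at hj
      exact h1 j hj.2.1 hj.2.2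
    linarith
  · linarith

private lemma visNU_empty' {N : ℕ} {i : Fin N} {x : Fin N → ℝ} {v : ℝ}
    (h : ∀ j, j ≠ i → x j < v) : visNU N i (Function.update x i v) = 1 - v := by
  have h2 : ∀ j, j ≠ i → Function.update x i v j < Function.update x i v i := by
    intro j hj
    rw [Function.update_of_ne hj, Function.update_self]
    exact h j hj
  rw [visNU_empty h2, Function.update_self]

private lemma visNU_ge' {N : ℕ} {i : Fin N} {x : Fin N → ℝ} {v m : ℝ}
    (h1 : ∀ j, j ≠ i → v ≤ x j → m ≤ x j) (h2 : m ≤ 1) :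
    m - v ≤ visNU N i (Function.update x i v) := by
  have h1' : ∀ j, j ≠ i → Function.update x i v i ≤ Function.update x i v j →
      m ≤ Function.update x i v j := by
    intro j hj hle
    rw [Function.update_of_ne hj] at hle ⊢
    rw [Function.update_self] at hle
    exact h1 j hj hle
  have := visNU_ge h1' h2
  rwa [Function.update_self] at this

private lemma visNU_le' {N : ℕ} {i j0 : Fin N} {x : Fin N → ℝ} {v : ℝ}
    (hj : j0 ≠ i) (hle : v ≤ x j0) : visNU N i (Function.update x i v) ≤ x j0 - v := by
  have := visNU_le (x := Function.update x i v) hj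
    (by rw [Function.update_of_ne hj, Function.update_self]; exact hle)
  rwa [Function.update_of_ne hj, Function.update_self] at this

private lemma visNU_slide {N : ℕ} {i : Fin N} {x : Fin N → ℝ} {b c : ℝ}
    (hcb : c < b) (h : ∀ j, j ≠ i → ¬ (c ≤ x j ∧ x j < b)) :
    visNU N i (Function.update x i c) = visNU N i (Function.update x i b) + (b - c) := by
  unfold visNU
  have hkey : (Finset.univ.filter fun j =>
        j ≠ i ∧ Function.update x i c i ≤ Function.update x i c j) =
      (Finset.univ.filter fun j =>
        j ≠ i ∧ Function.update x i b i ≤ Function.update x i b j) := by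
    ext j
    simp only [Finset.mem_filter, Finset.mem_univ, true_and]
    by_cases hj : j = i
    · simp [hj]
    · simp only [hj, ne_eq, not_false_eq_true, true_and,
        Function.update_self, Function.update_of_ne hj]
      constructor
      · intro hc
        by_contra hb
        exact h j hj ⟨hc, lt_of_not_ge hb⟩
      · intro hb
        exact hcb.le.trans hb
  rw [hkey]
  by_cases hne : (Finset.univ.filter fun j =>
      j ≠ i ∧ Function.update x i b i ≤ Function.update x i b j).Nonempty
  · rw [dif_pos hne, dif_pos hne]
    have heq : (Finset.univ.filter fun j =>
        j ≠ i ∧ Function.update x i b i ≤ Function.update x i b j).inf' hne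
          (Function.update x i c) =
        (Finset.univ.filter fun j =>
        j ≠ i ∧ Function.update x i b i ≤ Function.update x i b j).inf' hne
          (Function.update x i b) := by
      apply Finset.inf'_congr hne rfl
      intro j hj
      rw [Finset.mem_filter] at hj
      rw [Function.update_of_ne hj.2.1, Function.update_of_ne hj.2.1]
    rw [heq]
    simp only [Function.update_self]
    ring
  · rw [dif_neg hne, dif_neg hne]
    simp only [Function.update_self]; ring

private lemma pigeon {N : ℕ} (hN : 2 ≤ N) (i : Fin N) (a : Fin N → ℝ)
    (ha : ∀ j, j ≠ i → a j ∈ Set.Icc (0:ℝ) (((N:ℝ)-1)/N)) :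
    ∃ k : Fin N, ((k:ℝ)/N ≤ ((N:ℝ)-1)/N) ∧
      ∀ j, j ≠ i → (k:ℝ)/N ≤ a j → ((k:ℝ)+1)/N ≤ a j := by
  classical
  have hN0 : (0:ℝ) < N := by positivity
  have hfl : ∀ j, j ≠ i → Nat.floor ((N:ℝ) * a j) < N := by
    intro j hj
    rw [Nat.floor_lt (by nlinarith [(ha j hj).1])]
    have h2 := (ha j hj).2
    have : (N:ℝ) * a j ≤ (N:ℝ) - 1 := by
      rw [le_div_iff₀ hN0] at h2
      nlinarith
    linarith
  set f : Fin N → Fin N := fun j => ⟨Nat.floor ((N:ℝ) * a j) % N, Nat.mod_lt _ (by omega)⟩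
    with hf
  set T : Finset (Fin N) := (Finset.univ.erase i).image f with hT
  have hTcard : T.card < N := by
    calc T.card ≤ (Finset.univ.erase i).card := Finset.card_image_le
    _ = N - 1 := by rw [Finset.card_erase_of_mem (Finset.mem_univ i), Finset.card_univ,
          Fintype.card_fin]
    _ < N := by omega
  obtain ⟨k, hk⟩ : ∃ k : Fin N, k ∉ T := by
    by_contra h
    push_neg at h
    have : (Finset.univ : Finset (Fin N)).card ≤ T.card :=
      Finset.card_le_card (fun k _ => h k)
    rw [Finset.card_univ, Fintype.card_fin] at this
    omega
  refine ⟨k, ?_, ?_⟩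
  · rw [div_le_div_iff_of_pos_right hN0]
    have : (k:ℕ) < N := k.isLt
    have : ((k:ℕ):ℝ) ≤ (N:ℝ) - 1 := by
      have : (k:ℕ) + 1 ≤ N := this
      have := (Nat.cast_le (α := ℝ)).2 this
      push_cast at this
      linarith
    exact this
  · intro j hj hle
    have hfj : f j ≠ k := by
      intro he
      exact hk (hT ▸ Finset.mem_image.2 ⟨j, Finset.mem_erase.2 ⟨hj, Finset.mem_univ j⟩, he⟩)
    have hflj := hfl j hj
    have hfval : (f j : ℕ) = Nat.floor ((N:ℝ) * a j) := by
      simp only [hf]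
      exact Nat.mod_eq_of_lt hflj
    have hkle : (k:ℕ) ≤ Nat.floor ((N:ℝ) * a j) := by
      apply Nat.le_floor
      rw [div_le_iff₀ hN0] at hle
      push_cast
      nlinarith
    have hkne : (k:ℕ) ≠ Nat.floor ((N:ℝ) * a j) := by
      intro he
      apply hfj
      apply Fin.ext
      rw [hfval, ← he]
    have hk1 : (k:ℕ) + 1 ≤ Nat.floor ((N:ℝ) * a j) := by omega
    have := Nat.floor_le (by nlinarith [(ha j hj).1] : (0:ℝ) ≤ (N:ℝ) * a j)
    have hcast : ((k:ℕ):ℝ) + 1 ≤ Nat.floor ((N:ℝ) * a j) := by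
      have := (Nat.cast_le (α := ℝ)).2 hk1
      push_cast at this
      linarith
    rw [div_le_iff₀ hN0]
    nlinarith

private lemma stabilityE {N : ℕ} (hN : 2 ≤ N) :
    Stability (fun _ : Fin N => Set.Icc (0:ℝ) 1)
      (fun _ : Fin N => Set.Icc (0:ℝ) (((N:ℝ)-1)/N)) (visNU N) := by
  intro i a ha
  have hN0 : (0:ℝ) < N := by positivity
  obtain ⟨k, hk1, hk2⟩ := pigeon hN i a ha
  refine ⟨(k:ℝ)/N, ⟨by positivity, hk1⟩, ?_⟩
  intro c hc
  have hcK : ((N:ℝ)-1)/N < c := by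
    rcases hc with ⟨⟨hc0, hc1⟩, hc2⟩
    by_contra h
    exact hc2 ⟨hc0, not_lt.1 h⟩
  have hUc : visNU N i (update a i c) = 1 - c := by
    apply visNU_empty'
    intro j hj
    exact lt_of_le_of_lt (ha j hj).2 hcK
  have hUb : ((k:ℝ)+1)/N - (k:ℝ)/N ≤ visNU N i (update a i ((k:ℝ)/N)) := by
    apply visNU_ge'
    · intro j hj hle
      exact hk2 j hj hle
    · rw [div_le_one hN0]
      have : (k:ℕ) + 1 ≤ N := k.isLt
      have := (Nat.cast_le (α := ℝ)).2 this
      push_cast at this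
      linarith
  have heq : ((k:ℝ)+1)/N - (k:ℝ)/N = 1/N := by ring
  have heq2 : 1 - ((N:ℝ)-1)/N = 1/N := by field_simp; ring
  rw [hUc]
  rw [heq] at hUb
  linarith

private lemma unrestE {N : ℕ} (hN : 2 ≤ N) :
    Unrest (fun _ : Fin N => Set.Icc (0:ℝ) 1)
      (fun _ : Fin N => Set.Icc (0:ℝ) (((N:ℝ)-1)/N)) (visNU N) := by
  classical
  intro a ha
  have hN0 : (0:ℝ) < N := by positivity
  have hKlt : ((N:ℝ)-1)/N < 1 := by
    rw [div_lt_one hN0]; linarith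
  have huniv : (Finset.univ : Finset (Fin N)).Nonempty := ⟨⟨0, by omega⟩, Finset.mem_univ _⟩
  obtain ⟨i, -, hmax⟩ := Finset.exists_max_image Finset.univ a huniv
  by_cases htie : ∃ j, j ≠ i ∧ a j = a i
  · obtain ⟨k, hk1, hk2⟩ := pigeon hN i a (fun j _ => ha j)
    refine ⟨i, (k:ℝ)/N, ⟨by positivity, hk1⟩, ?_, ?_⟩
    · obtain ⟨j0, hj0, hj0e⟩ := htie
      have hUa : visNU N i a ≤ 0 := by
        have := visNU_le hj0 (le_of_eq hj0e.symm)
        rw [hj0e] at this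
        linarith
      have hUb : ((k:ℝ)+1)/N - (k:ℝ)/N ≤ visNU N i (update a i ((k:ℝ)/N)) := by
        apply visNU_ge'
        · intro j hj hle
          exact hk2 j hj hle
        · rw [div_le_one hN0]
          have : (k:ℕ) + 1 ≤ N := k.isLt
          have := (Nat.cast_le (α := ℝ)).2 this
          push_cast at this
          linarith
      have heq : ((k:ℝ)+1)/N - (k:ℝ)/N = 1/N := by ring
      rw [heq] at hUb
      have : (0:ℝ) < 1/N := by positivity
      linarith
    · intro c hc
      have hcK : ((N:ℝ)-1)/N < c := by
        rcases hc with ⟨⟨hc0, hc1⟩, hc2⟩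
        by_contra h
        exact hc2 ⟨hc0, not_lt.1 h⟩
      have hUc : visNU N i (update a i c) = 1 - c := by
        apply visNU_empty'
        intro j hj
        exact lt_of_le_of_lt (ha j).2 hcK
      have hUb : ((k:ℝ)+1)/N - (k:ℝ)/N ≤ visNU N i (update a i ((k:ℝ)/N)) := by
        apply visNU_ge'
        · intro j hj hle
          exact hk2 j hj hle
        · rw [div_le_one hN0]
          have : (k:ℕ) + 1 ≤ N := k.isLt
          have := (Nat.cast_le (α := ℝ)).2 this
          push_cast at this
          linarith
      have heq : ((k:ℝ)+1)/N - (k:ℝ)/N = 1/N := by ring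
      have heq2 : 1 - ((N:ℝ)-1)/N = 1/N := by field_simp; ring
      rw [hUc]
      rw [heq] at hUb
      linarith
  · push_neg at htie
    have hlt : ∀ j, j ≠ i → a j < a i :=
      fun j hj => lt_of_le_of_ne (hmax j (Finset.mem_univ j)) (htie j hj)
    have : Nontrivial (Fin N) := ⟨⟨⟨0, by omega⟩, ⟨1, by omega⟩, by simp [Fin.ext_iff]⟩⟩
    obtain ⟨j2', hj2'⟩ := exists_ne i
    obtain ⟨j2, hj2mem, hmax2⟩ := Finset.exists_max_image
      (Finset.univ.filter (· ≠ i)) a ⟨j2', by simp [hj2']⟩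
    have hj2i : j2 ≠ i := by simpa using hj2mem
    have hM2 : a j2 < a i := hlt j2 hj2i
    set b := (a j2 + a i)/2 with hbdef
    have hbM2 : a j2 < b := by rw [hbdef]; linarith
    have hbM : b < a i := by rw [hbdef]; linarith
    refine ⟨i, b, ⟨by rw [hbdef]; have := (ha j2).1; have := (ha i).1; linarith,
      by rw [hbdef]; have := (ha i).2; have := (ha j2).2; linarith⟩, ?_, ?_⟩
    · have hUb : visNU N i (update a i b) = 1 - b := by
        apply visNU_empty'
        intro j hj
        exact lt_of_le_of_lt (hmax2 j (by simp [hj])) hbM2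
      have hUa : visNU N i a = 1 - a i := visNU_empty hlt
      rw [hUb, hUa]
      linarith
    · intro c hc
      have hcK : ((N:ℝ)-1)/N < c := by
        rcases hc with ⟨⟨hc0, hc1⟩, hc2⟩
        by_contra h
        exact hc2 ⟨hc0, not_lt.1 h⟩
      have hUc : visNU N i (update a i c) = 1 - c := by
        apply visNU_empty'
        intro j hj
        exact lt_of_le_of_lt (ha j).2 hcK
      have hUb : visNU N i (update a i b) = 1 - b := by
        apply visNU_empty'
        intro j hj
        exact lt_of_le_of_lt (hmax2 j (by simp [hj])) hbM2
      rw [hUb, hUc]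
      have : b ≤ ((N:ℝ)-1)/N := le_trans hbM.le (ha i).2
      linarith

private lemma minimalE {N : ℕ} (hN : 2 ≤ N) (F : Fin N → Set ℝ)
    (hne : ∀ i, (F i).Nonempty) (hcl : ∀ i, IsClosed (F i))
    (hsub : ∀ i, F i ⊆ Set.Icc (0:ℝ) (((N:ℝ)-1)/N))
    (hmiss : ∃ i0 x, x ∈ Set.Icc (0:ℝ) (((N:ℝ)-1)/N) ∧ x ∉ F i0)
    (hstab : Stability (fun _ : Fin N => Set.Icc (0:ℝ) 1) F (visNU N)) : False := by
  classical
  have hN0 : (0:ℝ) < N := by positivity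
  set Kr : ℝ := ((N:ℝ)-1)/N with hKr
  have hK0 : 0 ≤ Kr := by
    rw [hKr]
    apply div_nonneg _ hN0.le
    have : (2:ℝ) ≤ N := by exact_mod_cast hN
    linarith
  have hK1 : Kr < 1 := by
    rw [hKr, div_lt_one hN0]; linarith
  have hbdd : ∀ j, BddAbove (F j) := fun j => BddAbove.mono (hsub j) bddAbove_Icc
  have hsup_mem : ∀ j, sSup (F j) ∈ F j := fun j => (hcl j).csSup_mem (hne j) (hbdd j)
  -- Part 1 : 0 ∈ F i for every i
  have key : ∀ (T : Finset (Fin N)), (∀ j ∈ T, 0 ∈ F j) →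
      ∀ i, i ∉ T → (∀ j, j ∉ T → sSup (F i) ≤ sSup (F j)) → 0 ∈ F i := by
    intro T hT i hiT hmin
    set x : Fin N → ℝ := fun j => if j ∈ T then 0 else if j = i then 0 else sSup (F j)
      with hx
    have hxF : ∀ j, j ≠ i → x j ∈ F j := by
      intro j hj
      by_cases hjT : j ∈ T
      · simpa [hx, hjT] using hT j hjT
      · simpa [hx, hjT, hj] using hsup_mem j
    obtain ⟨b, hbF, hb⟩ := hstab i x hxF
    by_contra h0
    have hb0 : 0 < b := lt_of_le_of_ne (hsub i hbF).1 (fun he => h0 (he ▸ hbF))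
    have hbβ : b ≤ sSup (F i) := le_csSup (hbdd i) hbF
    have hball : Set.Ioo (0:ℝ) b ⊆ F i := by
      intro c hc
      obtain ⟨hc0, hcb⟩ := hc
      by_contra hcF
      have hside : ∀ j, j ≠ i → ¬ (c ≤ x j ∧ x j < b) := by
        intro j hj hcon
        obtain ⟨h1, h2⟩ := hcon
        by_cases hjT : j ∈ T
        · rw [hx] at h1
          simp only [hjT, if_pos] at h1
          linarith
        · have hxj : x j = sSup (F j) := by simp [hx, hjT, hj]
          have : sSup (F i) ≤ x j := hxj ▸ hmin j hjT
          linarith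
      have hslide := visNU_slide hcb hside
      have hclt := hb c ⟨⟨hc0.le, by
        have := (hsub i hbF).2
        linarith⟩, hcF⟩
      linarith
    have h0c : (0:ℝ) ∈ closure (Set.Ioo (0:ℝ) b) := by
      rw [closure_Ioo hb0.ne]
      exact ⟨le_refl 0, hb0.le⟩
    exact h0 (closure_minimal hball (hcl i) h0c)
  have hzero : ∀ i, 0 ∈ F i := by
    by_contra h
    push_neg at h
    set T : Finset (Fin N) := Finset.univ.filter (fun j => 0 ∈ F j) with hT
    have hTne : (Finset.univ \ T).Nonempty := by
      obtain ⟨i, hi⟩ := h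
      exact ⟨i, by simp [hT, hi]⟩
    obtain ⟨i, hiT, hmin⟩ := Finset.exists_min_image (Finset.univ \ T)
      (fun j => sSup (F j)) hTne
    have hiT' : i ∉ T := (Finset.mem_sdiff.1 hiT).2
    have : 0 ∈ F i := by
      apply key T (fun j hj => by simpa [hT] using hj) i hiT'
      intro j hj
      exact hmin j (Finset.mem_sdiff.2 ⟨Finset.mem_univ j, hj⟩)
    rw [hT] at hiT'
    simp at hiT'
    exact hiT' this
  -- Part 2 : a positive initial segment in every F i
  have hnontriv : ∀ i : Fin N, ∃ j : Fin N, j ≠ i := by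
    intro i
    have : Nontrivial (Fin N) := ⟨⟨⟨0, by omega⟩, ⟨1, by omega⟩, by simp [Fin.ext_iff]⟩⟩
    exact exists_ne i
  have hlow : ∀ i, ∃ b, 0 < b ∧ Set.Icc (0:ℝ) b ⊆ F i := by
    intro i
    obtain ⟨b, hbF, hb⟩ := hstab i (fun _ => 0) (fun j _ => hzero j)
    have hbK := hsub i hbF
    have hcstar : ((Kr+1)/2 : ℝ) ∈ Set.Icc (0:ℝ) 1 \ F i := by
      constructor
      · constructor
        · linarith
        · linarith
      · intro hm
        have := (hsub i hm).2
        linarith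
    have hb0 : 0 < b := by
      rcases eq_or_lt_of_le hbK.1 with he | h
      · exfalso
        obtain ⟨j0, hj0⟩ := hnontriv i
        have hle : visNU N i (update (fun _ => (0:ℝ)) i b) ≤ 0 - b :=
          visNU_le' hj0 (by rw [← he])
        have hgc : visNU N i (update (fun _ => (0:ℝ)) i ((Kr+1)/2)) = 1 - (Kr+1)/2 := by
          apply visNU_empty'
          intro j hj
          show (0:ℝ) < (Kr+1)/2
          linarith
        have h1 := hb _ hcstar
        rw [hgc] at h1
        have : (0:ℝ) < 1 - (Kr+1)/2 := by linarith
        linarith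
      · exact h
    refine ⟨b, hb0, ?_⟩
    intro c hc
    obtain ⟨hc0, hcb⟩ := hc
    rcases eq_or_lt_of_le hc0 with he | hc0'
    · exact he ▸ hzero i
    rcases eq_or_lt_of_le hcb with he | hcb'
    · exact he ▸ hbF
    by_contra hcF
    have hside : ∀ j, j ≠ i → ¬ (c ≤ (fun _ => (0:ℝ)) j ∧ (fun _ => (0:ℝ)) j < b) := by
      intro j hj hcon
      simp only at hcon
      linarith [hcon.1]
    have hslide := visNU_slide hcb' hside
    have hclt := hb c ⟨⟨hc0, by linarith [hbK.2]⟩, hcF⟩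
    linarith
  -- Part 3 : the sweep-up contradiction
  choose bfun hbfun0 hbfunF using hlow
  have hNuniv : (Finset.univ : Finset (Fin N)).Nonempty := ⟨⟨0, by omega⟩, Finset.mem_univ _⟩
  set ε : ℝ := Finset.univ.inf' hNuniv bfun with hε
  have hε0 : 0 < ε := by
    rw [hε, Finset.lt_inf'_iff]
    intro i _
    exact hbfun0 i
  set Z : Set ℝ := {u | u ∈ Set.Icc (0:ℝ) Kr ∧ ∃ i, u ∉ F i} with hZ
  have hZne : Z.Nonempty := by
    obtain ⟨i0, u, hu1, hu2⟩ := hmiss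
    exact ⟨u, hu1, i0, hu2⟩
  have hZbdd : BddBelow Z := ⟨0, fun u hu => hu.1.1⟩
  set s : ℝ := sInf Z with hs
  have hs_lb : ∀ u ∈ Z, s ≤ u := fun u hu => csInf_le hZbdd hu
  have hsK : s ≤ Kr := by
    obtain ⟨u, hu⟩ := hZne
    exact le_trans (hs_lb u hu) hu.1.2
  have hs_mem_all : ∀ i, ∀ y : ℝ, 0 ≤ y → y < s → y ∈ F i := by
    intro i y hy0 hys
    by_contra hyF
    have : y ∈ Z := ⟨⟨hy0, le_trans hys.le hsK⟩, i, hyF⟩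
    exact absurd (hs_lb y this) (not_le.2 hys)
  have hsε : ε ≤ s := by
    apply le_csInf hZne
    intro u hu
    by_contra hlt
    push_neg at hlt
    obtain ⟨⟨hu0, _⟩, i, huF⟩ := hu
    apply huF
    apply hbfunF i
    constructor
    · exact hu0
    · calc u ≤ ε := hlt.le
        _ ≤ bfun i := Finset.inf'_le bfun (Finset.mem_univ i)
  have hs0 : 0 < s := lt_of_lt_of_le hε0 hsε
  have hsF : ∀ i, s ∈ F i := by
    intro i
    have hsub2 : Set.Ico (0:ℝ) s ⊆ F i := fun y hy => hs_mem_all i y hy.1 hy.2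
    have h1 : s ∈ closure (Set.Ico (0:ℝ) s) := by
      rw [closure_Ico hs0.ne]
      exact ⟨hs0.le, le_refl s⟩
    exact closure_minimal hsub2 (hcl i) h1
  have hIccs : ∀ j, ∀ y : ℝ, 0 ≤ y → y ≤ s → y ∈ F j := by
    intro j y h0 h1
    rcases eq_or_lt_of_le h1 with he | h2
    · exact he ▸ hsF j
    · exact hs_mem_all j y h0 h2
  have hsltK : s < Kr := by
    rcases lt_or_eq_of_le hsK with h | h
    · exact h
    · exfalso
      obtain ⟨u, ⟨⟨hu0, huK⟩, i, huF⟩⟩ := hZne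
      apply huF
      apply hIccs i u hu0
      rw [h]
      exact huK
  have hacc : ∀ δ : ℝ, 0 < δ → ∃ u ∈ Z, u < s + δ := by
    intro δ hδ
    by_contra hcon
    push_neg at hcon
    have : s + δ ≤ s := le_csInf hZne hcon
    linarith
  have hP : ∃ i0 : Fin N, ∀ δ : ℝ, 0 < δ →
      ∃ u, u ∉ F i0 ∧ s < u ∧ u < s + δ ∧ u ≤ Kr := by
    by_contra hcon
    push_neg at hcon
    choose δ hδ0 hδ using hcon
    obtain ⟨u, huZ, hu⟩ := hacc (Finset.univ.inf' hNuniv δ)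
      (by rw [Finset.lt_inf'_iff]; exact fun i _ => hδ0 i)
    obtain ⟨⟨hu0, huK⟩, i, huF⟩ := huZ
    have hsu : s < u := lt_of_le_of_ne (hs_lb u ⟨⟨hu0, huK⟩, i, huF⟩)
      (fun he => huF (he ▸ hsF i))
    have hKu := hδ i u huF hsu
      (lt_of_lt_of_le hu (add_le_add_right (Finset.inf'_le δ (Finset.mem_univ i)) s))
    linarith
  obtain ⟨i0, hPi0⟩ := hP
  obtain ⟨M, rfl⟩ : ∃ M, N = M + 1 := ⟨N - 1, by omega⟩
  have hM1 : 1 ≤ M := by omega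
  have hMR : (0:ℝ) < M := by
    have : (1:ℝ) ≤ M := by exact_mod_cast hM1
    linarith
  set d : ℝ := s / M with hd
  have hd0 : 0 < d := div_pos hs0 hMR
  have hKrM : Kr = (M:ℝ)/((M:ℝ)+1) := by
    rw [hKr]
    push_cast
    ring_nf
  have hsM : s < (M:ℝ)/((M:ℝ)+1) := hKrM ▸ hsltK
  have hsM' : s * ((M:ℝ)+1) < M := by
    rw [lt_div_iff₀ (by positivity)] at hsM
    exact hsM
  have hds : d + s < 1 := by
    have : d < 1 - s := by
      rw [hd, div_lt_iff₀ hMR]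
      nlinarith
    linarith
  set pos : Fin (M+1) → ℕ := fun j => if (j:ℕ) < (i0:ℕ) then (j:ℕ) else (j:ℕ) - 1
    with hpos
  set x : Fin (M+1) → ℝ := fun j => if j = i0 then 0 else s - (pos j : ℝ) * d with hx
  have hposle : ∀ j, j ≠ i0 → pos j ≤ M - 1 := by
    intro j hj
    have hj' : (j:ℕ) ≠ (i0:ℕ) := fun h => hj (Fin.ext h)
    have h1 := j.isLt
    have h2 := i0.isLt
    rw [hpos]
    simp only
    split_ifs with h
    · omega
    · omega
  have hxval : ∀ j, j ≠ i0 → x j = s - (pos j : ℝ) * d := by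
    intro j hj
    rw [hx]
    simp [hj]
  have hxle : ∀ j, j ≠ i0 → x j ≤ s := by
    intro j hj
    rw [hxval j hj]
    have : (0:ℝ) ≤ (pos j : ℝ) * d := by positivity
    linarith
  have hxge : ∀ j, j ≠ i0 → d ≤ x j := by
    intro j hj
    rw [hxval j hj]
    have h1 : ((pos j : ℕ):ℝ) ≤ ((M - 1 : ℕ):ℝ) := Nat.cast_le.2 (hposle j hj)
    have h2 : ((M - 1 : ℕ):ℝ) = (M:ℝ) - 1 := by
      rw [Nat.cast_sub hM1]
      norm_num
    have h3 : ((M:ℝ) - 1) * d = s - d := by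
      rw [hd]
      field_simp
    have h4 : (pos j : ℝ) * d ≤ ((M:ℝ) - 1) * d := by
      apply mul_le_mul_of_nonneg_right _ hd0.le
      rw [← h2]
      exact h1
    linarith
  have hxmem : ∀ j, j ≠ i0 → x j ∈ F j := fun j hj =>
    hIccs j (x j) (le_trans hd0.le (hxge j hj)) (hxle j hj)
  have hsurj : ∀ m : ℕ, m < M → ∃ j : Fin (M+1), j ≠ i0 ∧ pos j = m := by
    intro m hm
    by_cases hcse : m < (i0:ℕ)
    · refine ⟨⟨m, by omega⟩, ?_, ?_⟩
      · intro h
        rw [Fin.ext_iff] at h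
        simp at h
        omega
      · rw [hpos]
        simp only
        rw [if_pos (by simpa using hcse)]
    · have hcse' : (i0:ℕ) ≤ m := not_lt.1 hcse
      refine ⟨⟨m+1, by omega⟩, ?_, ?_⟩
      · intro h
        rw [Fin.ext_iff] at h
        simp at h
        omega
      · rw [hpos]
        simp only
        rw [if_neg (by simp; omega)]
        omega
  have hcover : ∀ b : ℝ, 0 ≤ b → b < s → ∃ j, j ≠ i0 ∧ b ≤ x j ∧ x j ≤ b + d := by
    intro b hb0 hbs
    set t : ℝ := (s - b) * M / s with ht
    have ht0 : 0 ≤ t := by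
      apply div_nonneg _ hs0.le
      apply mul_nonneg _ hMR.le
      linarith
    have htM : t ≤ M := by
      rw [ht, div_le_iff₀ hs0]
      nlinarith
    set m : ℕ := min (Nat.floor t) (M - 1) with hm
    have hmM : m < M := by omega
    obtain ⟨j, hji, hjp⟩ := hsurj m hmM
    have hmt : (m:ℝ) ≤ t := by
      rcases le_total (Nat.floor t) (M-1) with h | h
      · have he : m = Nat.floor t := by omega
        rw [he]
        exact Nat.floor_le ht0
      · have he : m = M - 1 := by omega
        rw [he]
        have h2 : ((M-1:ℕ):ℝ) ≤ ((Nat.floor t : ℕ):ℝ) := Nat.cast_le.2 h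
        exact le_trans h2 (Nat.floor_le ht0)
    have hmt1 : t ≤ (m:ℝ) + 1 := by
      rcases le_total (Nat.floor t) (M-1) with h | h
      · have he : m = Nat.floor t := by omega
        rw [he]
        exact (Nat.lt_floor_add_one t).le
      · have he : m = M - 1 := by omega
        rw [he]
        have h2 : ((M-1:ℕ):ℝ) + 1 = (M:ℝ) := by
          rw [Nat.cast_sub hM1]
          ring
        rw [h2]
        exact htM
    have htd : t * d = s - b := by
      rw [ht, hd]
      field_simp
    refine ⟨j, hji, ?_, ?_⟩
    · rw [hxval j hji, hjp]
      have h1 : (m:ℝ) * d ≤ t * d := mul_le_mul_of_nonneg_right hmt hd0.le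
      rw [htd] at h1
      linarith
    · rw [hxval j hji, hjp]
      have h1 : t * d ≤ ((m:ℝ) + 1) * d := mul_le_mul_of_nonneg_right hmt1 hd0.le
      rw [htd] at h1
      have h2 : ((m:ℝ) + 1) * d = (m:ℝ) * d + d := by ring
      linarith
  obtain ⟨b, hbF, hb⟩ := hstab i0 x hxmem
  have hbK := hsub i0 hbF
  by_cases hcase : b ≤ s
  · have hgb : visNU (M+1) i0 (update x i0 b) ≤ d := by
      rcases eq_or_lt_of_le hcase with he | hlt2
      · obtain ⟨j1, hj1, hj1p⟩ := hsurj 0 (by omega)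
        have hx1 : x j1 = s := by
          rw [hxval j1 hj1, hj1p]
          simp
        have := visNU_le' (x := x) (v := b) hj1 (by rw [hx1]; exact he.le)
        rw [hx1] at this
        have : visNU (M+1) i0 (update x i0 b) ≤ s - b := this
        rw [he] at this ⊢
        linarith
      · obtain ⟨j, hji, hj1, hj2⟩ := hcover b hbK.1 hlt2
        have := visNU_le' (x := x) (v := b) hji hj1
        linarith
    obtain ⟨u, huF, hsu, huδ, huK⟩ := hPi0 (1 - d - s) (by linarith)
    have hgu : visNU (M+1) i0 (update x i0 u) = 1 - u := by
      apply visNU_empty'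
      intro j hj
      exact lt_of_le_of_lt (hxle j hj) hsu
    have hbu := hb u ⟨⟨by linarith, by linarith⟩, huF⟩
    rw [hgu] at hbu
    linarith
  · push_neg at hcase
    obtain ⟨u, huF, hsu, hub, huK⟩ := hPi0 (b - s) (by linarith)
    have hub' : u < b := by linarith
    have hside : ∀ j, j ≠ i0 → ¬ (u ≤ x j ∧ x j < b) := by
      intro j hj hcon
      linarith [hxle j hj, hcon.1]
    have hslide := visNU_slide hub' hside
    have hbu := hb u ⟨⟨by linarith, by linarith⟩, huF⟩
    linarith

end ECAux

/-- For the `N`-player visibility game with `N ≥ 2`,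
`[0, (N-1)/N]^N` is an equilibrium cycle. -/
theorem visibilityN_ec (N : ℕ) (hN : 2 ≤ N) :
    IsEquilibriumCycle (fun _ : Fin N => Set.Icc (0 : ℝ) 1)
      (fun _ : Fin N => Set.Icc (0 : ℝ) (((N : ℝ) - 1) / N))
      (visNU N) := by
  classical
  have hN0 : (0:ℝ) < N := by positivity
  have hK0 : (0:ℝ) ≤ ((N:ℝ)-1)/N := by
    apply div_nonneg _ hN0.le
    have : (2:ℝ) ≤ N := by exact_mod_cast hN
    linarith
  have hK1 : ((N:ℝ)-1)/N ≤ 1 := by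
    rw [div_le_one hN0]
    linarith
  refine ⟨fun i => ⟨0, le_refl 0, hK0⟩, fun i => Set.Icc_subset_Icc le_rfl hK1,
    fun i => isClosed_Icc, stabilityE hN, unrestE hN, ?_⟩
  intro Fs hFne hFcl hss hSU
  apply minimalE hN Fs hFne hFcl ?_ ?_ hSU.1
  · intro i y hy
    set z : Fin N → ℝ := fun j => if j = i then y else (hFne j).some with hz
    have hzmem : z ∈ Set.pi Set.univ Fs := by
      intro j _
      by_cases h : j = i
      · subst h
        simpa [hz] using hy
      · simpa [hz, h] using (hFne j).some_mem
    have h2 := hss.subset hzmem i (Set.mem_univ i)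
    simpa [hz] using h2
  · obtain ⟨w, hwE, hwF⟩ := Set.exists_of_ssubset hss
    rw [Set.mem_pi] at hwF
    push_neg at hwF
    obtain ⟨i0, _, hi0⟩ := hwF
    exact ⟨i0, w i0, hwE i0 (Set.mem_univ i0), hi0⟩
end

section
/- In a best response (BR) game, every non-trivial curb set C satisfies the first two conditions of an equilibrium cycle: (1) [Stability] for every player i and every a_{-i} ∈ C_{-i}, there exists a_i ∈ C_i with U_i(a_i, a_{-i}) > U_i(ã_i, a_{-i}) for all ã_i ∈ A_i \ C_i; and (2) [Unrest] for every profile a ∈ C, there exist a player i and a'_i ∈ C_i with U_i(a'_i, a_{-i}) > U_i(a_i, a_{-i}) and U_i(a'_i, a_{-i}) > U_i(ã_i, a_{-i}) for all ã_i ∈ A_i \ C_i. -/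
open Set Function

variable {ι : Type*} [Fintype ι] [DecidableEq ι] {α : ι → Type*}

/-- `b` is a best response of player `i` against the opponent profile given by `a`. -/
def IsBestResponse (A : ∀ i, Set (α i)) (U : ι → (∀ j, α j) → ℝ)
    (i : ι) (a : ∀ j, α j) (b : α i) : Prop :=
  b ∈ A i ∧ ∀ c ∈ A i, U i (update a i b) ≥ U i (update a i c)

/-- A best response (BR) game: best responses always exist. -/
def IsBRGame (A : ∀ i, Set (α i)) (U : ι → (∀ j, α j) → ℝ) : Prop :=
  ∀ (i : ι) (a : ∀ j, α j), (∀ j, j ≠ i → a j ∈ A j) → ∃ b, IsBestResponse A U i a b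

/-- A curb set: a nonempty Cartesian product set containing all best responses
to opponent profiles within it. -/
def IsCurbSet (A C : ∀ i, Set (α i)) (U : ι → (∀ j, α j) → ℝ) : Prop :=
  (∀ i, (C i).Nonempty) ∧ (∀ i, C i ⊆ A i) ∧
  ∀ (i : ι) (a : ∀ j, α j), (∀ j, j ≠ i → a j ∈ C j) →
    ∀ b, IsBestResponse A U i a b → b ∈ C i

/-- A minimal curb set: no strict (Cartesian product) subset is a curb set. -/
def IsMinimalCurbSet (A C : ∀ i, Set (α i)) (U : ι → (∀ j, α j) → ℝ) : Prop :=
  IsCurbSet A C U ∧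
  ∀ F : ∀ i, Set (α i), Set.pi Set.univ F ⊂ Set.pi Set.univ C → ¬ IsCurbSet A F U

/-- A non-trivial curb set: a curb set containing no pure Nash equilibrium. -/
def IsNonTrivialCurbSet (A C : ∀ i, Set (α i)) (U : ι → (∀ j, α j) → ℝ) : Prop :=
  IsCurbSet A C U ∧ ∀ a : ∀ j, α j, (∀ j, a j ∈ C j) → ¬ IsPureNash A U a

/-- In a BR game, every non-trivial curb set satisfies the stability
and unrest conditions of an equilibrium cycle. -/
theorem nontrivial_curb_stability_unrest
    (A C : ∀ i, Set (α i)) (U : ι → (∀ j, α j) → ℝ)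
    (hA : ∀ i, (A i).Nonempty)
    (hBR : IsBRGame A U)
    (hC : IsNonTrivialCurbSet A C U) :
    Stability A C U ∧ Unrest A C U := by
  obtain ⟨⟨hCne, hCA, hcurb⟩, hNash⟩ := hC
  have key : ∀ (i : ι) (a : ∀ j, α j), (∀ j, j ≠ i → a j ∈ C j) →
      ∃ b ∈ C i, (∀ c ∈ A i, U i (update a i b) ≥ U i (update a i c)) ∧
        ∀ c ∈ A i \ C i, U i (update a i b) > U i (update a i c) := by
    intro i a ha
    obtain ⟨b, hb⟩ := hBR i a (fun j hj => hCA j (ha j hj))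
    have hbC := hcurb i a ha b hb
    refine ⟨b, hbC, hb.2, ?_⟩
    intro c hc
    rcases lt_or_eq_of_le (hb.2 c hc.1) with h | h
    · exact h
    · exact absurd (hcurb i a ha c ⟨hc.1, fun d hd => (hb.2 d hd).trans h.ge⟩) hc.2
  constructor
  · intro i a ha
    obtain ⟨b, hbC, _, hstrict⟩ := key i a ha
    exact ⟨b, hbC, hstrict⟩
  · intro a ha
    have hnn : ∃ i, ∃ b ∈ A i, U i (update a i b) > U i a := by
      by_contra hcon
      push_neg at hcon
      exact hNash a ha ⟨fun j => hCA j (ha j), fun i b hb => hcon i b hb⟩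
    obtain ⟨i, b', hb'A, hgt⟩ := hnn
    obtain ⟨b, hbC, hmax, hstrict⟩ := key i a (fun j _ => ha j)
    exact ⟨i, b, hbC, lt_of_lt_of_le hgt (hmax b' hb'A), hstrict⟩
end

section
/- In a finite strategic form game G, if E is an equilibrium cycle of G, then E contains the node set of a non-singleton sink strongly connected component of the best response graph of G. -/
open Set Function

variable {ι : Type*} [Fintype ι] [DecidableEq ι] {α : ι → Type*}

/-- Equilibrium cycle in a finite game (all subsets are closed, action sets are the
full finite types, i.e. `A i = univ`). -/
def IsEquilibriumCycleFin (E : ∀ i, Set (α i)) (U : ι → (∀ j, α j) → ℝ) : Prop :=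
  (∀ i, (E i).Nonempty) ∧
  Stability (fun i => (Set.univ : Set (α i))) E U ∧
  Unrest (fun i => (Set.univ : Set (α i))) E U ∧
  ∀ F : ∀ i, Set (α i), (∀ i, (F i).Nonempty) →
    Set.pi Set.univ F ⊂ Set.pi Set.univ E →
    ¬(Stability (fun i => (Set.univ : Set (α i))) F U ∧
      Unrest (fun i => (Set.univ : Set (α i))) F U)

/-- Edge of the best response graph: `a` and `b` differ only in the action of a single
player `i`, `b i` is a best response of player `i` against `a`, and it strictly
improves player `i`'s utility. -/
def BREdge (U : ι → (∀ j, α j) → ℝ) (a b : ∀ j, α j) : Prop :=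
  ∃ i : ι, a i ≠ b i ∧ (∀ j, j ≠ i → a j = b j) ∧
    (∀ c : α i, U i (update a i c) ≤ U i b) ∧ U i a < U i b

/-- A strongly connected component of the best response graph: a nonempty, mutually
reachable set of profiles that is maximal with this property. -/
def IsSCC (U : ι → (∀ j, α j) → ℝ) (S : Set (∀ j, α j)) : Prop :=
  S.Nonempty ∧ (∀ a ∈ S, ∀ b ∈ S, Relation.ReflTransGen (BREdge U) a b) ∧
  ∀ T : Set (∀ j, α j), S ⊆ T →
    (∀ a ∈ T, ∀ b ∈ T, Relation.ReflTransGen (BREdge U) a b) → T ⊆ S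

/-- A sink SCC: an SCC with no edge leaving it. -/
def IsSinkSCC (U : ι → (∀ j, α j) → ℝ) (S : Set (∀ j, α j)) : Prop :=
  IsSCC U S ∧ ∀ a ∈ S, ∀ b, BREdge U a b → b ∈ S

/-- In a finite game, every equilibrium cycle contains the node set of
a non-singleton sink SCC of the best response graph. -/
theorem ec_contains_sink_scc [∀ i, Fintype (α i)] [∀ i, Nonempty (α i)]
    (U : ι → (∀ j, α j) → ℝ) (E : ∀ i, Set (α i))
    (hE : IsEquilibriumCycleFin E U) :
    ∃ S : Set (∀ j, α j), IsSinkSCC U S ∧ (∃ a ∈ S, ∃ b ∈ S, a ≠ b) ∧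
      S ⊆ Set.pi Set.univ E := by
  classical
  obtain ⟨hne, hstab, hunrest, -⟩ := hE
  set P : Set (∀ j, α j) := Set.pi Set.univ E with hPdef
  have hmemP : ∀ a : ∀ j, α j, a ∈ P ↔ ∀ j, a j ∈ E j := by
    intro a; simp [hPdef, Set.mem_pi]
  -- all BR edges leaving P stay in P
  have hclose : ∀ a ∈ P, ∀ b, BREdge U a b → b ∈ P := by
    rintro a ha b ⟨i, hab, hoff, hbr, hlt⟩
    have hb_eq : b = update a i (b i) := by
      funext j
      by_cases hji : j = i
      · subst hji; simp
      · rw [update_of_ne hji]; exact (hoff j hji).symm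
    obtain ⟨d, hdE, hd⟩ := hstab i a (fun j _ => (hmemP a).1 ha j)
    rw [hmemP]
    intro j
    by_cases hji : j = i
    · subst hji
      by_contra hbi
      have h1 := hd (b j) ⟨Set.mem_univ _, hbi⟩
      have h2 := hbr d
      rw [← hb_eq] at h1
      linarith
    · rw [← hoff j hji]; exact (hmemP a).1 ha j
  -- every node of P has an outgoing edge (into P, with distinct target)
  have hstep : ∀ a ∈ P, ∃ b, BREdge U a b ∧ b ∈ P ∧ a ≠ b := by
    intro a ha
    obtain ⟨i, b, hbE, hgt, -⟩ := hunrest a ((hmemP a).1 ha)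
    obtain ⟨m, hm⟩ := Finite.exists_max (fun c : α i => U i (update a i c))
    have hmb : U i a < U i (update a i m) := lt_of_lt_of_le hgt (hm b)
    have hmi : a i ≠ m := by
      intro h
      rw [← h, update_eq_self] at hmb
      exact lt_irrefl _ hmb
    have hedge : BREdge U a (update a i m) := by
      refine ⟨i, by simpa using hmi, fun j hj => (update_of_ne hj m a).symm, fun c => hm c, hmb⟩
    refine ⟨update a i m, hedge, hclose a ha _ hedge, ?_⟩
    intro h
    apply hmi
    have := congrFun h i
    simpa using this
  -- reachability sets
  set R : (∀ j, α j) → Set (∀ j, α j) :=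
    fun a => {b | Relation.ReflTransGen (BREdge U) a b} with hRdef
  have hRP : ∀ a ∈ P, R a ⊆ P := by
    intro a ha b hb
    induction hb with
    | refl => exact ha
    | tail _ h ih => exact hclose _ ih _ h
  have hPne : P.Nonempty := by
    refine ⟨fun j => (hne j).choose, (hmemP _).2 fun j => (hne j).choose_spec⟩
  obtain ⟨x, hxP, hmin⟩ := Set.exists_min_image P (fun a => (R a).ncard) (Set.toFinite P) hPne
  -- key: reach sets of points reachable from x coincide with R x
  have key : ∀ b ∈ R x, R b = R x := by
    intro b hb
    have hbP : b ∈ P := hRP x hxP hb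
    have hsub : R b ⊆ R x := fun c hc => Relation.ReflTransGen.trans hb hc
    exact Set.eq_of_subset_of_ncard_le hsub (hmin b hbP) (Set.toFinite _)
  have hxRx : x ∈ R x := Relation.ReflTransGen.refl
  obtain ⟨y, hyedge, hyP, hxy⟩ := hstep x hxP
  have hyRx : y ∈ R x := Relation.ReflTransGen.single hyedge
  refine ⟨R x, ⟨⟨⟨x, hxRx⟩, ?_, ?_⟩, ?_⟩, ⟨x, hxRx, y, hyRx, hxy⟩, hRP x hxP⟩
  · -- mutual reachability
    intro a ha b hb
    have hx_in : x ∈ R a := by rw [key a ha]; exact hxRx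
    exact Relation.ReflTransGen.trans hx_in hb
  · -- maximality
    intro T hST hT t ht
    exact hT x (hST hxRx) t ht
  · -- sink
    intro a ha b hedge
    exact Relation.ReflTransGen.tail ha hedge
end

section
/- Two equilibrium cycles of a strategic form game do not intersect: if E and F are both equilibrium cycles of the same game, then either E = F or E ∩ F = ∅. -/
open Set Function

variable {ι : Type*} [Fintype ι] [DecidableEq ι] {α : ι → Type*}

/-- Two equilibrium cycles of a game do not intersect: they are either
equal or disjoint. -/
theorem ecs_do_not_intersect [∀ i, MetricSpace (α i)]
    (A E F : ∀ i, Set (α i)) (U : ι → (∀ j, α j) → ℝ)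
    (hA : ∀ i, (A i).Nonempty)
    (hE : IsEquilibriumCycle A E U)
    (hF : IsEquilibriumCycle A F U) :
    Set.pi Set.univ E = Set.pi Set.univ F ∨
      Set.pi Set.univ E ∩ Set.pi Set.univ F = ∅ := by
  obtain ⟨hEne, hEA, hEcl, hEstab, hEunrest, hEmin⟩ := hE
  obtain ⟨hFne, hFA, hFcl, hFstab, hFunrest, hFmin⟩ := hF
  by_cases hdisj : Set.pi Set.univ E ∩ Set.pi Set.univ F = ∅
  · exact Or.inr hdisj
  left
  obtain ⟨a₀, ha₀⟩ := Set.nonempty_iff_ne_empty.2 hdisj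
  set G : ∀ i, Set (α i) := fun i => E i ∩ F i with hGdef
  have ha₀G : ∀ i, a₀ i ∈ G i := fun i =>
    ⟨ha₀.1 i (mem_univ i), ha₀.2 i (mem_univ i)⟩
  -- G satisfies stability
  have stabG : Stability A G U := by
    intro i a ha
    obtain ⟨b, hbE, hb⟩ := hEstab i a (fun j hj => (ha j hj).1)
    obtain ⟨b', hb'F, hb'⟩ := hFstab i a (fun j hj => (ha j hj).2)
    by_cases h : U i (update a i b) ≥ U i (update a i b')
    · have hbF : b ∈ F i := by
        by_contra hc
        have := hb' b ⟨hEA i hbE, hc⟩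
        linarith
      refine ⟨b, ⟨hbE, hbF⟩, fun c hc => ?_⟩
      by_cases hcE : c ∈ E i
      · have hcF : c ∉ F i := fun hcF => hc.2 ⟨hcE, hcF⟩
        have := hb' c ⟨hc.1, hcF⟩
        linarith
      · exact hb c ⟨hc.1, hcE⟩
    · push_neg at h
      have hb'E : b' ∈ E i := by
        by_contra hc
        have := hb b' ⟨hFA i hb'F, hc⟩
        linarith
      refine ⟨b', ⟨hb'E, hb'F⟩, fun c hc => ?_⟩
      by_cases hcF : c ∈ F i
      · have hcE : c ∉ E i := fun hcE => hc.2 ⟨hcE, hcF⟩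
        have := hb c ⟨hc.1, hcE⟩
        linarith
      · exact hb' c ⟨hc.1, hcF⟩
  -- G satisfies unrest
  have unrestG : Unrest A G U := by
    intro a ha
    obtain ⟨i, b, hbE, hgt, hb⟩ := hEunrest a (fun j => (ha j).1)
    obtain ⟨b', hb'F, hb'⟩ := hFstab i a (fun j _ => (ha j).2)
    by_cases h : U i (update a i b) ≥ U i (update a i b')
    · have hbF : b ∈ F i := by
        by_contra hc
        have := hb' b ⟨hEA i hbE, hc⟩
        linarith
      refine ⟨i, b, ⟨hbE, hbF⟩, hgt, fun c hc => ?_⟩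
      by_cases hcE : c ∈ E i
      · have hcF : c ∉ F i := fun hcF => hc.2 ⟨hcE, hcF⟩
        have := hb' c ⟨hc.1, hcF⟩
        linarith
      · exact hb c ⟨hc.1, hcE⟩
    · push_neg at h
      have hb'E : b' ∈ E i := by
        by_contra hc
        have := hb b' ⟨hFA i hb'F, hc⟩
        linarith
      refine ⟨i, b', ⟨hb'E, hb'F⟩, by linarith, fun c hc => ?_⟩
      by_cases hcF : c ∈ F i
      · have hcE : c ∉ E i := fun hcE => hc.2 ⟨hcE, hcF⟩
        have := hb c ⟨hc.1, hcE⟩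
        linarith
      · exact hb' c ⟨hc.1, hcF⟩
  have hGne : ∀ i, (G i).Nonempty := fun i => ⟨a₀ i, ha₀G i⟩
  have hGcl : ∀ i, IsClosed (G i) := fun i => (hEcl i).inter (hFcl i)
  have hGsubE : Set.pi Set.univ G ⊆ Set.pi Set.univ E :=
    fun x hx j hj => (hx j hj).1
  have hGsubF : Set.pi Set.univ G ⊆ Set.pi Set.univ F :=
    fun x hx j hj => (hx j hj).2
  have hGE : Set.pi Set.univ G = Set.pi Set.univ E := by
    rcases hGsubE.ssubset_or_eq with hss | heq
    · exact absurd ⟨stabG, unrestG⟩ (hEmin G hGne hGcl hss)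
    · exact heq
  have hGF : Set.pi Set.univ G = Set.pi Set.univ F := by
    rcases hGsubF.ssubset_or_eq with hss | heq
    · exact absurd ⟨stabG, unrestG⟩ (hFmin G hGne hGcl hss)
    · exact heq
  rw [← hGE, hGF]
end

section
/- If a strategic form game G has a very weakly dominant pure Nash equilibrium, then G has no equilibrium cycle. -/
open Set Function

variable {ι : Type*} [Fintype ι] [DecidableEq ι] {α : ι → Type*}

/-- If a game has a very weakly dominant pure Nash equilibrium, then
it has no equilibrium cycle. -/
theorem dominant_nash_no_ec [∀ i, MetricSpace (α i)]
    (A : ∀ i, Set (α i)) (U : ι → (∀ j, α j) → ℝ)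
    (hA : ∀ i, (A i).Nonempty)
    (astar : ∀ j, α j) (hmem : ∀ j, astar j ∈ A j)
    (hdom : ∀ (i : ι) (a : ∀ j, α j), (∀ j, j ≠ i → a j ∈ A j) →
      ∀ b ∈ A i, U i (update a i (astar i)) ≥ U i (update a i b)) :
    ∀ E : ∀ i, Set (α i), ¬ IsEquilibriumCycle A E U := by
  rintro E ⟨hne, hEA, _, hstab, hunrest, _⟩
  -- pick an arbitrary profile in E
  choose e he using hne
  -- astar i ∈ E i for every i
  have hstarE : ∀ i, astar i ∈ E i := by
    intro i
    by_contra hni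
    obtain ⟨b, hb, hgt⟩ := hstab i e (fun j _ => he j)
    have h1 := hgt (astar i) ⟨hmem i, hni⟩
    have h2 := hdom i e (fun j _ => hEA j (he j)) b (hEA i hb)
    exact absurd h2 (not_le.mpr h1)
  obtain ⟨i, b, hb, hgt, _⟩ := hunrest astar hstarE
  have h2 := hdom i astar (fun j _ => hmem j) b (hEA i hb)
  rw [update_eq_self] at h2
  exact absurd h2 (not_le.mpr hgt)
end

section
/- If a strategic form game G has a dominant equilibrium cycle E, then E is the only equilibrium cycle of G, and G has no pure Nash equilibrium. -/
open Set Function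

variable {ι : Type*} [Fintype ι] [DecidableEq ι] {α : ι → Type*}

/-- A dominant equilibrium cycle: for every player `i`, every action outside `E i`
and every opponent profile (in the action sets), some action in `E i` strictly
improves upon it and weakly dominates every action outside `E i`. -/
def IsDominantEC [∀ i, MetricSpace (α i)] (A E : ∀ i, Set (α i))
    (U : ι → (∀ j, α j) → ℝ) : Prop :=
  IsEquilibriumCycle A E U ∧
  ∀ (i : ι) (a : ∀ j, α j), a i ∈ A i \ E i → (∀ j, j ≠ i → a j ∈ A j) →
    ∃ b ∈ E i, U i (update a i b) > U i a ∧
      ∀ c ∈ A i \ E i, U i (update a i b) ≥ U i (update a i c)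

/-- If a game has a dominant equilibrium cycle `E`, then `E` is the
only equilibrium cycle of the game, and the game has no pure Nash equilibrium. -/
theorem dominant_ec_unique_no_nash [∀ i, MetricSpace (α i)]
    (A E : ∀ i, Set (α i)) (U : ι → (∀ j, α j) → ℝ)
    (hA : ∀ i, (A i).Nonempty)
    (hE : IsDominantEC A E U) :
    (∀ F : ∀ i, Set (α i), IsEquilibriumCycle A F U →
      Set.pi Set.univ F = Set.pi Set.univ E) ∧
    ∀ a : ∀ j, α j, ¬ IsPureNash A U a := by

  obtain ⟨⟨hEne, hEA, hEcl, hEstab, hEunr, hEmin⟩, hdom⟩ := hE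
  constructor
  · intro F hF
    obtain ⟨hFne, hFA, hFcl, hFstab, hFunr, hFmin⟩ := hF
    set G : ∀ i, Set (α i) := fun i => F i ∩ E i with hGdef
    have hGne : ∀ i, (G i).Nonempty := by
      intro i
      choose f hf using hFne
      obtain ⟨b, hbF, hb⟩ := hFstab i f (fun j _ => hf j)
      by_cases hbE : b ∈ E i
      · exact ⟨b, hbF, hbE⟩
      · obtain ⟨b', hb'E, hb'1, _⟩ := hdom i (update f i b)
          (by simp [hFA i hbF, hbE])
          (fun j hj => by simp [Function.update_of_ne hj, hFA j (hf j)])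
        rw [Function.update_idem] at hb'1
        by_cases hb'F : b' ∈ F i
        · exact ⟨b', hb'F, hb'E⟩
        · have := hb b' ⟨hEA i hb'E, hb'F⟩
          linarith
    have hGstab : Stability A G U := by
      intro i a ha
      obtain ⟨b, hbF, hb⟩ := hFstab i a (fun j hj => (ha j hj).1)
      obtain ⟨e, heE, he⟩ := hEstab i a (fun j hj => (ha j hj).2)
      by_cases hbE : b ∈ E i
      · by_cases heF : e ∈ F i
        · by_cases hbe : U i (update a i b) ≥ U i (update a i e)
          · refine ⟨b, ⟨hbF, hbE⟩, fun c hc => ?_⟩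
            by_cases hcF : c ∈ F i
            · have hcE : c ∉ E i := fun h => hc.2 ⟨hcF, h⟩
              have := he c ⟨hc.1, hcE⟩
              linarith
            · exact hb c ⟨hc.1, hcF⟩
          · push_neg at hbe
            refine ⟨e, ⟨heF, heE⟩, fun c hc => ?_⟩
            by_cases hcE : c ∈ E i
            · have hcF : c ∉ F i := fun h => hc.2 ⟨h, hcE⟩
              have := hb c ⟨hc.1, hcF⟩
              linarith
            · exact he c ⟨hc.1, hcE⟩
        · refine ⟨b, ⟨hbF, hbE⟩, fun c hc => ?_⟩
          by_cases hcF : c ∈ F i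
          · have hcE : c ∉ E i := fun h => hc.2 ⟨hcF, h⟩
            have h1 := hb e ⟨hEA i heE, heF⟩
            have h2 := he c ⟨hc.1, hcE⟩
            linarith
          · exact hb c ⟨hc.1, hcF⟩
      · have h1 := he b ⟨hFA i hbF, hbE⟩
        have heF : e ∈ F i := by
          by_contra heF
          have := hb e ⟨hEA i heE, heF⟩
          linarith
        refine ⟨e, ⟨heF, heE⟩, fun c hc => ?_⟩
        by_cases hcE : c ∈ E i
        · have hcF : c ∉ F i := fun h => hc.2 ⟨h, hcE⟩
          have := hb c ⟨hc.1, hcF⟩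
          linarith
        · exact he c ⟨hc.1, hcE⟩
    have hGunr : Unrest A G U := by
      intro a ha
      obtain ⟨i, b, hbF, hbgt, hb⟩ := hFunr a (fun j => (ha j).1)
      obtain ⟨e, heE, he⟩ := hEstab i a (fun j _ => (ha j).2)
      by_cases hbE : b ∈ E i
      · by_cases heF : e ∈ F i
        · by_cases hbe : U i (update a i b) ≥ U i (update a i e)
          · refine ⟨i, b, ⟨hbF, hbE⟩, hbgt, fun c hc => ?_⟩
            by_cases hcF : c ∈ F i
            · have hcE : c ∉ E i := fun h => hc.2 ⟨hcF, h⟩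
              have := he c ⟨hc.1, hcE⟩
              linarith
            · exact hb c ⟨hc.1, hcF⟩
          · push_neg at hbe
            refine ⟨i, e, ⟨heF, heE⟩, by linarith, fun c hc => ?_⟩
            by_cases hcE : c ∈ E i
            · have hcF : c ∉ F i := fun h => hc.2 ⟨h, hcE⟩
              have := hb c ⟨hc.1, hcF⟩
              linarith
            · exact he c ⟨hc.1, hcE⟩
        · refine ⟨i, b, ⟨hbF, hbE⟩, hbgt, fun c hc => ?_⟩
          by_cases hcF : c ∈ F i
          · have hcE : c ∉ E i := fun h => hc.2 ⟨hcF, h⟩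
            have h1 := hb e ⟨hEA i heE, heF⟩
            have h2 := he c ⟨hc.1, hcE⟩
            linarith
          · exact hb c ⟨hc.1, hcF⟩
      · have h1 := he b ⟨hFA i hbF, hbE⟩
        have heF : e ∈ F i := by
          by_contra heF
          have := hb e ⟨hEA i heE, heF⟩
          linarith
        refine ⟨i, e, ⟨heF, heE⟩, by linarith, fun c hc => ?_⟩
        by_cases hcE : c ∈ E i
        · have hcF : c ∉ F i := fun h => hc.2 ⟨h, hcE⟩
          have := hb c ⟨hc.1, hcF⟩
          linarith
        · exact he c ⟨hc.1, hcE⟩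
    have hGcl : ∀ i, IsClosed (G i) := fun i => (hFcl i).inter (hEcl i)
    have hGF : Set.pi Set.univ G ⊆ Set.pi Set.univ F :=
      fun x hx j hj => (hx j hj).1
    have hGE : Set.pi Set.univ G ⊆ Set.pi Set.univ E :=
      fun x hx j hj => (hx j hj).2
    have h1 : Set.pi Set.univ G = Set.pi Set.univ F := by
      by_contra h
      exact hFmin G hGne hGcl ((Set.ssubset_iff_subset_ne).2 ⟨hGF, h⟩) ⟨hGstab, hGunr⟩
    have h2 : Set.pi Set.univ G = Set.pi Set.univ E := by
      by_contra h
      exact hEmin G hGne hGcl ((Set.ssubset_iff_subset_ne).2 ⟨hGE, h⟩) ⟨hGstab, hGunr⟩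
    rw [← h1, h2]
  · rintro a ⟨haA, hnash⟩
    by_cases haE : ∀ j, a j ∈ E j
    · obtain ⟨i, b, hbE, hgt, -⟩ := hEunr a haE
      have := hnash i b (hEA i hbE)
      linarith
    · push_neg at haE
      obtain ⟨i, hai⟩ := haE
      obtain ⟨b, hbE, hgt, -⟩ := hdom i a ⟨haA i, hai⟩ (fun j _ => haA j)
      have := hnash i b (hEA i hbE)
      linarith
end
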